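/- arXiv:2507.17485 — 3 statements merged into one kernel-verified Lean document; each statement's English description precedes it below -/
import Mathlib

section
/- Let f(x,y,z) be the complexified spin-1 Hamiltonian x·S_x + y·S_y + z·S_z with complex parameters x,y,z ∈ ℂ. If f(x,y,z) has an eigenvalue with geometric multiplicity at least 2, then x = y = z = 0. -/
open Matrix

/-- The spin-1 operator `S_x`. -/
noncomputable def spinSx : Matrix (Fin 3) (Fin 3) ℂ :=
  ((Real.sqrt 2 : ℂ))⁻¹ • !![0, 1, 0; 1, 0, 1; 0, 1, 0]

/-- The spin-1 operator `S_y`. -/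
noncomputable def spinSy : Matrix (Fin 3) (Fin 3) ℂ :=
  ((Real.sqrt 2 : ℂ))⁻¹ • !![0, -Complex.I, 0; Complex.I, 0, -Complex.I; 0, Complex.I, 0]

/-- The spin-1 operator `S_z`. -/
noncomputable def spinSz : Matrix (Fin 3) (Fin 3) ℂ :=
  !![1, 0, 0; 0, 0, 0; 0, 0, -1]

/-- The complexified spin-1 Hamiltonian `f(x,y,z) = x·S_x + y·S_y + z·S_z`, `x,y,z ∈ ℂ`. -/
noncomputable def spinHamC (x y z : ℂ) : Matrix (Fin 3) (Fin 3) ℂ :=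
  x • spinSx + y • spinSy + z • spinSz

lemma exists_ker_vec' (A : Matrix (Fin 3) (Fin 3) ℂ)
    (h : 2 ≤ Module.finrank ℂ (LinearMap.ker A.mulVecLin)) (i : Fin 3) :
    ∃ v : Fin 3 → ℂ, v ≠ 0 ∧ A.mulVec v = 0 ∧ v i = 0 := by
  have hsurj : Function.Surjective (LinearMap.proj i : (Fin 3 → ℂ) →ₗ[ℂ] ℂ) :=
    fun a => ⟨fun _ => a, rfl⟩
  have h1 := LinearMap.finrank_range_add_finrank_ker
    (LinearMap.proj i : (Fin 3 → ℂ) →ₗ[ℂ] ℂ)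
  rw [LinearMap.range_eq_top.2 hsurj, finrank_top] at h1
  have h2 : Module.finrank ℂ (Fin 3 → ℂ) = 3 := by simp
  have h3 : Module.finrank ℂ ℂ = 1 := Module.finrank_self ℂ
  rw [h2, h3] at h1
  have hsum := Submodule.finrank_sup_add_finrank_inf_eq
    (LinearMap.ker A.mulVecLin)
    (LinearMap.ker (LinearMap.proj i : (Fin 3 → ℂ) →ₗ[ℂ] ℂ))
  have hle : Module.finrank ℂ
      ↥(LinearMap.ker A.mulVecLin ⊔
        LinearMap.ker (LinearMap.proj i : (Fin 3 → ℂ) →ₗ[ℂ] ℂ)) ≤ 3 := by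
    have h4 := Submodule.finrank_le (LinearMap.ker A.mulVecLin ⊔
        LinearMap.ker (LinearMap.proj i : (Fin 3 → ℂ) →ₗ[ℂ] ℂ))
    simpa using h4
  have hpos : 0 < Module.finrank ℂ
      ↥(LinearMap.ker A.mulVecLin ⊓
        LinearMap.ker (LinearMap.proj i : (Fin 3 → ℂ) →ₗ[ℂ] ℂ)) := by omega
  have hne : (LinearMap.ker A.mulVecLin ⊓
      LinearMap.ker (LinearMap.proj i : (Fin 3 → ℂ) →ₗ[ℂ] ℂ)) ≠ ⊥ := by
    intro hbot
    rw [hbot, finrank_bot] at hpos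
    exact lt_irrefl 0 hpos
  obtain ⟨v, hvmem, hvne⟩ := Submodule.exists_mem_ne_zero_of_ne_bot hne
  exact ⟨v, hvne, hvmem.1, hvmem.2⟩

/-- if the complexified spin-1 Hamiltonian `f(x,y,z)` has an eigenvalue with
geometric multiplicity at least 2, then `x = y = z = 0`. -/
theorem spin1_complex_isolated (x y z : ℂ)
    (h : ∃ μ : ℂ, 2 ≤ Module.finrank ℂ
      (LinearMap.ker (spinHamC x y z - μ • 1).mulVecLin)) :
    x = 0 ∧ y = 0 ∧ z = 0 := by
  obtain ⟨μ, hμ⟩ := h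
  set c : ℂ := ((Real.sqrt 2 : ℂ))⁻¹ with hc
  have hc0 : c ≠ 0 := by
    rw [hc]
    apply inv_ne_zero
    exact_mod_cast Real.sqrt_ne_zero'.2 (by norm_num)
  set p := c * (x - Complex.I * y) with hp'
  set q := c * (x + Complex.I * y) with hq'
  have hA : spinHamC x y z - μ • 1 = !![z - μ, p, 0; q, -μ, p; 0, q, -z - μ] := by
    ext i j
    fin_cases i <;> fin_cases j <;>
      simp [spinHamC, spinSx, spinSy, spinSz, Matrix.one_apply, hp', hq', hc] <;> ring
  rw [hA] at hμ
  have eqs : ∀ r : Fin 3 → ℂ,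
      Matrix.mulVec !![z - μ, p, 0; q, -μ, p; 0, q, -z - μ] r = 0 →
      (z - μ) * r 0 + p * r 1 = 0 ∧ q * r 0 - μ * r 1 + p * r 2 = 0 ∧
        q * r 1 + (-z - μ) * r 2 = 0 := by
    intro r hr
    have h0 := congrFun hr 0
    have h1 := congrFun hr 1
    have h2 := congrFun hr 2
    simp [Matrix.mulVec, dotProduct, Fin.sum_univ_three] at h0 h1 h2
    exact ⟨by linear_combination h0, by linear_combination h1, by linear_combination h2⟩
  obtain ⟨v, hv0, hvA, hvi⟩ := exists_ker_vec' _ hμ 0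
  obtain ⟨w, hw0, hwA, hwi⟩ := exists_ker_vec' _ hμ 2
  obtain ⟨u, hu0, huA, hui⟩ := exists_ker_vec' _ hμ 1
  obtain ⟨ev0, ev1, ev2⟩ := eqs v hvA
  obtain ⟨ew0, ew1, ew2⟩ := eqs w hwA
  obtain ⟨eu0, eu1, eu2⟩ := eqs u huA
  rw [hvi] at ev0 ev1
  rw [hwi] at ew1 ew2
  rw [hui] at eu0 eu1 eu2
  -- nonvanishing components
  have hvne : v 1 ≠ 0 ∨ v 2 ≠ 0 := by
    by_contra hcon
    push_neg at hcon
    exact hv0 (funext fun j => by fin_cases j <;> simp [hvi, hcon.1, hcon.2])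
  have hwne : w 0 ≠ 0 ∨ w 1 ≠ 0 := by
    by_contra hcon
    push_neg at hcon
    exact hw0 (funext fun j => by fin_cases j <;> simp [hwi, hcon.1, hcon.2])
  have hune : u 0 ≠ 0 ∨ u 2 ≠ 0 := by
    by_contra hcon
    push_neg at hcon
    exact hu0 (funext fun j => by fin_cases j <;> simp [hui, hcon.1, hcon.2])
  -- p = 0
  have hp0 : p = 0 := by
    rcases hvne with h1 | h2
    · -- ev0 : (z-μ)*0 + p * v 1 = 0
      have : p * v 1 = 0 := by linear_combination ev0
      rcases mul_eq_zero.1 this with h | h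
      · exact h
      · exact absurd h h1
    · rcases eq_or_ne (v 1) 0 with h1 | h1
      · have : p * v 2 = 0 := by linear_combination ev1 + μ * h1
        rcases mul_eq_zero.1 this with h | h
        · exact h
        · exact absurd h h2
      · have : p * v 1 = 0 := by linear_combination ev0
        exact (mul_eq_zero.1 this).resolve_right h1
  have hq0 : q = 0 := by
    rcases hwne with h1 | h2
    · rcases eq_or_ne (w 1) 0 with hh | hh
      · have : q * w 0 = 0 := by linear_combination ew1 + μ * hh
        exact (mul_eq_zero.1 this).resolve_right h1
      · have : q * w 1 = 0 := by linear_combination ew2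
        exact (mul_eq_zero.1 this).resolve_right hh
    · have : q * w 1 = 0 := by linear_combination ew2
      exact (mul_eq_zero.1 this).resolve_right h2
  -- x = 0 and y = 0
  have hxy : x - Complex.I * y = 0 ∧ x + Complex.I * y = 0 := by
    constructor
    · exact (mul_eq_zero.1 hp0).resolve_left hc0
    · exact (mul_eq_zero.1 hq0).resolve_left hc0
  have hx : x = 0 := by linear_combination (hxy.1 + hxy.2) / 2
  have hy : y = 0 := by
    have hI : Complex.I * y = 0 := by linear_combination (hxy.2 - hxy.1) / 2
    exact (mul_eq_zero.1 hI).resolve_left Complex.I_ne_zero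
  refine ⟨hx, hy, ?_⟩
  -- z = 0
  have euz0 : (z - μ) * u 0 = 0 := by linear_combination eu0
  have euz2 : (z + μ) * u 2 = 0 := by linear_combination -eu2
  have evz1 : μ * v 1 = 0 := by linear_combination -ev1 + v 2 * hp0
  have evz2 : (z + μ) * v 2 = 0 := by linear_combination -ev2 + v 1 * hq0
  have ewz0 : (z - μ) * w 0 = 0 := by linear_combination ew0 - w 1 * hp0
  have ewz1 : μ * w 1 = 0 := by linear_combination -ew1 + w 0 * hq0
  rcases hune with hu | hu
  · -- z = μ
    have hzμ : z = μ := sub_eq_zero.1 ((mul_eq_zero.1 euz0).resolve_right hu)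
    rcases hvne with hv | hv
    · have hμ0 : μ = 0 := (mul_eq_zero.1 evz1).resolve_right hv
      rw [hzμ, hμ0]
    · have hzz : z + μ = 0 := (mul_eq_zero.1 evz2).resolve_right hv
      linear_combination (hzz) / 2 + (sub_eq_zero.2 hzμ) / 2
  · -- z = -μ
    have hzμ : z + μ = 0 := by
      have := (mul_eq_zero.1 euz2).resolve_right hu
      linear_combination this
    rcases hwne with hw | hw
    · have hzz : z - μ = 0 := (mul_eq_zero.1 ewz0).resolve_right hw
      linear_combination (hzμ + hzz) / 2
    · have hμ0 : μ = 0 := (mul_eq_zero.1 ewz1).resolve_right hw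
      linear_combination hzμ - hμ0
end

section
/- Let J ⊂ ℂ[x,y,z,λ] be the ideal generated by the 2×2 minors of H(x,y,z) − λ·I where H(x,y,z) = [[z, x−iy, 0],[x+iy, 0, x−iy],[0, x+iy, −z]]. Then the quotient ℂ[x,y,z,λ]/J is a 6-dimensional complex vector space, with basis given by the residue classes of 1, x, y, z, λ, x², and in the quotient the relations [x²] = [y²] = [z²]/2 = [λ²]/2 hold. -/
open MvPolynomial

/-- The spin-1 Hamiltonian minus `λ·I`, with entries in `ℂ[x,y,z,λ]`
(`x = X 0`, `y = X 1`, `z = X 2`, `λ = X 3`). -/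
noncomputable def spinHamPoly : Matrix (Fin 3) (Fin 3) (MvPolynomial (Fin 4) ℂ) :=
  !![X 2 - X 3, X 0 - C Complex.I * X 1, 0;
     X 0 + C Complex.I * X 1, -X 3, X 0 - C Complex.I * X 1;
     0, X 0 + C Complex.I * X 1, -X 2 - X 3]

/-- The ideal generated by the nine 2×2 minors of `H(x,y,z) - λ·I`. -/
noncomputable def spinMinorIdeal : Ideal (MvPolynomial (Fin 4) ℂ) :=
  Ideal.span {p | ∃ i j : Fin 3,
    p = (spinHamPoly.submatrix i.succAbove j.succAbove).det}

/-- Explicit forms of the nine 2×2 minors. -/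
noncomputable def gp : Fin 3 → Fin 3 → MvPolynomial (Fin 4) ℂ :=
  ![![X 3 * X 2 + X 3^2 - X 0^2 - X 1^2,
     -((X 0 + C Complex.I * X 1) * (X 2 + X 3)),
     (X 0 + C Complex.I * X 1)^2],
    ![-((X 0 - C Complex.I * X 1) * (X 2 + X 3)),
     X 3^2 - X 2^2,
     (X 0 + C Complex.I * X 1) * (X 2 - X 3)],
    ![(X 0 - C Complex.I * X 1)^2,
     (X 0 - C Complex.I * X 1) * (X 2 - X 3),
     X 3^2 - X 3 * X 2 - X 0^2 - X 1^2]]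

lemma hI : (C Complex.I : MvPolynomial (Fin 4) ℂ)^2 = -1 := by
  rw [← C_pow, Complex.I_sq, map_neg, map_one]

lemma gp_det (i j : Fin 3) : (spinHamPoly.submatrix i.succAbove j.succAbove).det = gp i j := by
  fin_cases i <;> fin_cases j <;>
    simp [spinHamPoly, gp, Matrix.det_fin_two, Fin.succAbove, Matrix.submatrix] <;>
    (first
      | ring1
      | linear_combination (X 1 : MvPolynomial (Fin 4) ℂ)^2 * hI)

lemma gp_mem (i j : Fin 3) : gp i j ∈ spinMinorIdeal :=
  gp_det i j ▸ Ideal.subset_span ⟨i, j, rfl⟩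

-- unfolded values of gp at the nine index pairs
lemma gp00 : gp 0 0 = X 3 * X 2 + X 3^2 - X 0^2 - X 1^2 := by simp [gp]
lemma gp01 : gp 0 1 = -((X 0 + C Complex.I * X 1) * (X 2 + X 3)) := by simp [gp]
lemma gp02 : gp 0 2 = (X 0 + C Complex.I * X 1)^2 := by simp [gp]
lemma gp10 : gp 1 0 = -((X 0 - C Complex.I * X 1) * (X 2 + X 3)) := by simp [gp]
lemma gp11 : gp 1 1 = X 3^2 - X 2^2 := by simp [gp]
lemma gp12 : gp 1 2 = (X 0 + C Complex.I * X 1) * (X 2 - X 3) := by simp [gp]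
lemma gp20 : gp 2 0 = (X 0 - C Complex.I * X 1)^2 := by simp [gp]
lemma gp21 : gp 2 1 = (X 0 - C Complex.I * X 1) * (X 2 - X 3) := by simp [gp]
lemma gp22 : gp 2 2 = X 3^2 - X 3 * X 2 - X 0^2 - X 1^2 := by simp [gp]

namespace SpinAux

local notation "R4" => MvPolynomial (Fin 4) ℂ
local notation "J" => spinMinorIdeal

lemma half_mem {t : R4} (h : 2 * t ∈ J) : t ∈ J := by
  have h2 := Ideal.mul_mem_left _ (C (1/2) : R4) h
  have : (C (1/2) : R4) * (2 * t) = t := by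
    rw [show ((2:R4)) = C 2 from (map_ofNat C 2).symm, ← mul_assoc, ← map_mul]
    norm_num
  rwa [this] at h2

lemma quarter_mem {t : R4} (h : 4 * t ∈ J) : t ∈ J := by
  apply half_mem; apply half_mem
  rwa [show (2:R4) * (2 * t) = 4 * t by ring]

lemma mZL : (X 2 * X 3 : R4) ∈ J := by
  apply half_mem
  have : (2 * (X 2 * X 3) : R4) = gp 0 0 - gp 2 2 := by
    rw [gp00, gp22]; ring
  rw [this]; exact sub_mem (gp_mem 0 0) (gp_mem 2 2)

lemma mXY : (X 0 * X 1 : R4) ∈ J := by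
  apply quarter_mem
  have : (4 * (X 0 * X 1) : R4) = (-(C Complex.I)) * gp 0 2 + C Complex.I * gp 2 0 := by
    rw [gp02, gp20]
    linear_combination (4 * X 0 * X 1 : R4) * hI
  rw [this]
  exact add_mem (Ideal.mul_mem_left _ _ (gp_mem 0 2)) (Ideal.mul_mem_left _ _ (gp_mem 2 0))

lemma mY2 : (X 1^2 - X 0^2 : R4) ∈ J := by
  apply half_mem
  have : (2 * (X 1^2 - X 0^2) : R4) = -gp 0 2 - gp 2 0 := by
    rw [gp02, gp20]
    linear_combination (2 * X 1^2 : R4) * hI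
  rw [this]; exact sub_mem (neg_mem (gp_mem 0 2)) (gp_mem 2 0)

lemma mXZ : (X 0 * X 2 : R4) ∈ J := by
  apply quarter_mem
  have : (4 * (X 0 * X 2) : R4) = gp 1 2 - gp 0 1 + gp 2 1 - gp 1 0 := by
    rw [gp12, gp01, gp21, gp10]; ring
  rw [this]
  exact sub_mem (add_mem (sub_mem (gp_mem 1 2) (gp_mem 0 1)) (gp_mem 2 1)) (gp_mem 1 0)

lemma mYZ : (X 1 * X 2 : R4) ∈ J := by
  apply quarter_mem
  have : (4 * (X 1 * X 2) : R4)
      = (-(C Complex.I)) * (gp 1 2 - gp 0 1 - gp 2 1 + gp 1 0) := by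
    rw [gp12, gp01, gp21, gp10]
    linear_combination (4 * X 1 * X 2 : R4) * hI
  rw [this]
  exact Ideal.mul_mem_left _ _
    (add_mem (sub_mem (sub_mem (gp_mem 1 2) (gp_mem 0 1)) (gp_mem 2 1)) (gp_mem 1 0))

lemma mXL : (X 0 * X 3 : R4) ∈ J := by
  apply quarter_mem
  have : (4 * (X 0 * X 3) : R4) = -(gp 1 2 + gp 0 1 + gp 2 1 + gp 1 0) := by
    rw [gp12, gp01, gp21, gp10]; ring
  rw [this]
  exact neg_mem (add_mem (add_mem (add_mem (gp_mem 1 2) (gp_mem 0 1)) (gp_mem 2 1)) (gp_mem 1 0))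

lemma mYL : (X 1 * X 3 : R4) ∈ J := by
  apply quarter_mem
  have : (4 * (X 1 * X 3) : R4)
      = C Complex.I * (gp 1 2 + gp 0 1 - gp 2 1 - gp 1 0) := by
    rw [gp12, gp01, gp21, gp10]
    linear_combination (4 * X 1 * X 3 : R4) * hI
  rw [this]
  exact Ideal.mul_mem_left _ _
    (sub_mem (sub_mem (add_mem (gp_mem 1 2) (gp_mem 0 1)) (gp_mem 2 1)) (gp_mem 1 0))

lemma mL2 : (X 3^2 - 2 * X 0^2 : R4) ∈ J := by
  apply half_mem
  have : (2 * (X 3^2 - 2 * X 0^2) : R4) = gp 0 0 + gp 2 2 - gp 0 2 - gp 2 0 := by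
    rw [gp00, gp22, gp02, gp20]
    linear_combination (2 * X 1^2 : R4) * hI
  rw [this]
  exact sub_mem (sub_mem (add_mem (gp_mem 0 0) (gp_mem 2 2)) (gp_mem 0 2)) (gp_mem 2 0)

lemma mZ2 : (X 2^2 - 2 * X 0^2 : R4) ∈ J := by
  apply half_mem
  have : (2 * (X 2^2 - 2 * X 0^2) : R4)
      = -(2 * gp 1 1) + gp 0 0 + gp 2 2 - gp 0 2 - gp 2 0 := by
    rw [gp11, gp00, gp22, gp02, gp20]
    linear_combination (2 * X 1^2 : R4) * hI
  rw [this]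
  exact sub_mem (sub_mem (add_mem (add_mem
    (neg_mem (Ideal.mul_mem_left _ _ (gp_mem 1 1))) (gp_mem 0 0)) (gp_mem 2 2))
    (gp_mem 0 2)) (gp_mem 2 0)

lemma mX3 : (X 0^3 : R4) ∈ J := by
  apply half_mem
  have : (2 * X 0^3 : R4) = (-X 0) * (X 3^2 - 2 * X 0^2) + X 3 * (X 0 * X 3) := by ring
  rw [this]
  exact add_mem (Ideal.mul_mem_left _ _ mL2) (Ideal.mul_mem_left _ _ mXL)

lemma mX2X1 : (X 0^2 * X 1 : R4) ∈ J := by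
  rw [show (X 0^2 * X 1 : R4) = X 0 * (X 0 * X 1) by ring]
  exact Ideal.mul_mem_left _ _ mXY

lemma mX2X2 : (X 0^2 * X 2 : R4) ∈ J := by
  rw [show (X 0^2 * X 2 : R4) = X 0 * (X 0 * X 2) by ring]
  exact Ideal.mul_mem_left _ _ mXZ

lemma mX2X3 : (X 0^2 * X 3 : R4) ∈ J := by
  rw [show (X 0^2 * X 3 : R4) = X 0 * (X 0 * X 3) by ring]
  exact Ideal.mul_mem_left _ _ mXL


noncomputable def ev : R4 →+* ℂ := eval (0 : Fin 4 → ℂ)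

noncomputable def psi (p : R4) : ℂ :=
  ev (pderiv 0 (pderiv 0 p)) + ev (pderiv 1 (pderiv 1 p))
    + 2 * ev (pderiv 2 (pderiv 2 p)) + 2 * ev (pderiv 3 (pderiv 3 p))

set_option maxHeartbeats 1000000 in
lemma vanish {p : R4} (hp : p ∈ spinMinorIdeal) :
    ev p = 0 ∧ (∀ i, ev (pderiv i p) = 0) ∧ psi p = 0 := by
  refine Submodule.span_induction ?_ ?_ ?_ ?_ hp
  · rintro q ⟨i, j, rfl⟩
    rw [gp_det]
    fin_cases i <;> fin_cases j <;>
      refine ⟨by simp [ev, gp, pderiv_mul, pderiv_pow, pderiv_C],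
        fun k => by fin_cases k <;> simp [ev, gp, pderiv_mul, pderiv_pow, pderiv_C],
        by (simp +decide [psi, ev, gp, pderiv_mul, pderiv_pow, pderiv_C, Pi.single_apply,
              map_ofNat]) <;> norm_num⟩
  · exact ⟨by simp [ev], fun i => by simp [ev], by simp [psi, ev]⟩
  · rintro x y hx hy ⟨h0x, hDx, hpx⟩ ⟨h0y, hDy, hpy⟩
    refine ⟨by simp [h0x, h0y], fun i => by simp [hDx i, hDy i], ?_⟩
    simp only [psi, map_add] at *
    linear_combination hpx + hpy
  · rintro a x hx ⟨h0, hD, hpsi⟩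
    rw [smul_eq_mul]
    have key : ∀ i : Fin 4, ev (pderiv i (pderiv i (a * x)))
        = ev a * ev (pderiv i (pderiv i x)) := by
      intro i
      rw [pderiv_mul, map_add, pderiv_mul, pderiv_mul]
      simp [map_add, map_mul, h0, hD i]
    refine ⟨by simp [map_mul, h0], fun i => by simp [pderiv_mul, map_mul, h0, hD i], ?_⟩
    simp only [psi, key]
    simp only [psi] at hpsi
    linear_combination (ev a) * hpsi

lemma mk_C_mul (a : ℂ) (p : R4) :
    Ideal.Quotient.mk J (C a * p) = a • Ideal.Quotient.mk J p := by
  rw [← smul_eq_C_mul, ← Ideal.Quotient.mkₐ_eq_mk ℂ, map_smul]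

lemma span_top :
    Submodule.span ℂ
      ({Ideal.Quotient.mk J 1,
        Ideal.Quotient.mk J (X 0),
        Ideal.Quotient.mk J (X 1),
        Ideal.Quotient.mk J (X 2),
        Ideal.Quotient.mk J (X 3),
        Ideal.Quotient.mk J (X 0 ^ 2)} : Set (R4 ⧸ J)) = ⊤ := by
  set S := Submodule.span ℂ
      ({Ideal.Quotient.mk J 1,
        Ideal.Quotient.mk J (X 0),
        Ideal.Quotient.mk J (X 1),
        Ideal.Quotient.mk J (X 2),
        Ideal.Quotient.mk J (X 3),
        Ideal.Quotient.mk J (X 0 ^ 2)} : Set (R4 ⧸ J)) with hS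
  rw [Submodule.eq_top_iff']
  intro w
  obtain ⟨p, rfl⟩ := Ideal.Quotient.mk_surjective w
  induction p using MvPolynomial.induction_on with
  | C a =>
      rw [show (C a : R4) = C a * 1 by ring, mk_C_mul]
      exact Submodule.smul_mem _ _ (Submodule.subset_span (Or.inl rfl))
  | add p q hp hq =>
      rw [map_add]; exact add_mem hp hq
  | mul_X p i hp =>
      rw [map_mul]
      refine Submodule.span_induction (p := fun w _ => w * Ideal.Quotient.mk J (X i) ∈ S)
        ?_ ?_ ?_ ?_ hp
      · rintro w hw
        simp only [Set.mem_insert_iff, Set.mem_singleton_iff] at hw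
        have hz : ∀ q : R4, q ∈ J → Ideal.Quotient.mk J q = 0 :=
          fun q hq => Ideal.Quotient.eq_zero_iff_mem.mpr hq
        rcases hw with rfl | rfl | rfl | rfl | rfl | rfl
        · rw [← map_mul, one_mul]
          refine Submodule.subset_span ?_
          fin_cases i <;> simp only [Fin.zero_eta, Fin.mk_one, Fin.reduceFinMk]
          exacts [Or.inr (Or.inl rfl), Or.inr (Or.inr (Or.inl rfl)),
            Or.inr (Or.inr (Or.inr (Or.inl rfl))),
            Or.inr (Or.inr (Or.inr (Or.inr (Or.inl rfl))))]
        · fin_cases i <;> simp only [Fin.zero_eta, Fin.mk_one, Fin.reduceFinMk]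
          · rw [← map_mul, show (X 0 * X 0 : R4) = X 0^2 by ring]
            exact Submodule.subset_span (Or.inr (Or.inr (Or.inr (Or.inr (Or.inr rfl)))))
          · rw [← map_mul, hz _ mXY]; exact zero_mem _
          · rw [← map_mul, hz _ mXZ]; exact zero_mem _
          · rw [← map_mul, hz _ mXL]; exact zero_mem _
        · fin_cases i <;> simp only [Fin.zero_eta, Fin.mk_one, Fin.reduceFinMk]
          · rw [← map_mul, mul_comm, hz _ mXY]; exact zero_mem _
          · rw [← map_mul, show (X 1 * X 1 : R4) = X 1^2 by ring,
              (Ideal.Quotient.mk_eq_mk_iff_sub_mem _ _).mpr mY2]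
            exact Submodule.subset_span (Or.inr (Or.inr (Or.inr (Or.inr (Or.inr rfl)))))
          · rw [← map_mul, hz _ mYZ]; exact zero_mem _
          · rw [← map_mul, hz _ mYL]; exact zero_mem _
        · fin_cases i <;> simp only [Fin.zero_eta, Fin.mk_one, Fin.reduceFinMk]
          · rw [← map_mul, mul_comm, hz _ mXZ]; exact zero_mem _
          · rw [← map_mul, mul_comm, hz _ mYZ]; exact zero_mem _
          · rw [← map_mul, show (X 2 * X 2 : R4) = X 2^2 by ring,
              (Ideal.Quotient.mk_eq_mk_iff_sub_mem _ _).mpr mZ2, map_mul, map_ofNat, two_mul]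
            exact add_mem
              (Submodule.subset_span (Or.inr (Or.inr (Or.inr (Or.inr (Or.inr rfl))))))
              (Submodule.subset_span (Or.inr (Or.inr (Or.inr (Or.inr (Or.inr rfl))))))
          · rw [← map_mul, hz _ mZL]; exact zero_mem _
        · fin_cases i <;> simp only [Fin.zero_eta, Fin.mk_one, Fin.reduceFinMk]
          · rw [← map_mul, mul_comm, hz _ mXL]; exact zero_mem _
          · rw [← map_mul, mul_comm, hz _ mYL]; exact zero_mem _
          · rw [← map_mul, mul_comm, hz _ mZL]; exact zero_mem _
          · rw [← map_mul, show (X 3 * X 3 : R4) = X 3^2 by ring,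
              (Ideal.Quotient.mk_eq_mk_iff_sub_mem _ _).mpr mL2, map_mul, map_ofNat, two_mul]
            exact add_mem
              (Submodule.subset_span (Or.inr (Or.inr (Or.inr (Or.inr (Or.inr rfl))))))
              (Submodule.subset_span (Or.inr (Or.inr (Or.inr (Or.inr (Or.inr rfl))))))
        · fin_cases i <;> simp only [Fin.zero_eta, Fin.mk_one, Fin.reduceFinMk]
          · rw [← map_mul, show (X 0^2 * X 0 : R4) = X 0^3 by ring, hz _ mX3]
            exact zero_mem _
          · rw [← map_mul, hz _ mX2X1]; exact zero_mem _
          · rw [← map_mul, hz _ mX2X2]; exact zero_mem _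
          · rw [← map_mul, hz _ mX2X3]; exact zero_mem _
      · beta_reduce; rw [zero_mul]; exact zero_mem _
      · intro x y _ _ hx hy; beta_reduce at hx hy ⊢; rw [add_mul]; exact add_mem hx hy
      · intro a x _ hx; beta_reduce at hx ⊢; rw [smul_mul_assoc]
        exact Submodule.smul_mem _ _ hx

end SpinAux

set_option maxHeartbeats 1000000 in
/-- the quotient `ℂ[x,y,z,λ]/J` by the ideal `J` of 2×2 minors of
`H(x,y,z) - λ·I` is a 6-dimensional complex vector space, with basis the residue classes of
`1, x, y, z, λ, x²`, and in the quotient `[x²] = [y²] = [z²]/2 = [λ²]/2`. -/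
theorem spin1_minor_quotient_dimension :
    Module.finrank ℂ (MvPolynomial (Fin 4) ℂ ⧸ spinMinorIdeal) = 6 ∧
    LinearIndependent ℂ
      ![Ideal.Quotient.mk spinMinorIdeal 1,
        Ideal.Quotient.mk spinMinorIdeal (X 0),
        Ideal.Quotient.mk spinMinorIdeal (X 1),
        Ideal.Quotient.mk spinMinorIdeal (X 2),
        Ideal.Quotient.mk spinMinorIdeal (X 3),
        Ideal.Quotient.mk spinMinorIdeal (X 0 ^ 2)] ∧
    Submodule.span ℂ
      {Ideal.Quotient.mk spinMinorIdeal 1,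
        Ideal.Quotient.mk spinMinorIdeal (X 0),
        Ideal.Quotient.mk spinMinorIdeal (X 1),
        Ideal.Quotient.mk spinMinorIdeal (X 2),
        Ideal.Quotient.mk spinMinorIdeal (X 3),
        Ideal.Quotient.mk spinMinorIdeal (X 0 ^ 2)} = ⊤ ∧
    Ideal.Quotient.mk spinMinorIdeal (X 0 ^ 2) =
      Ideal.Quotient.mk spinMinorIdeal (X 1 ^ 2) ∧
    2 * Ideal.Quotient.mk spinMinorIdeal (X 0 ^ 2) =
      Ideal.Quotient.mk spinMinorIdeal (X 2 ^ 2) ∧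
    2 * Ideal.Quotient.mk spinMinorIdeal (X 0 ^ 2) =
      Ideal.Quotient.mk spinMinorIdeal (X 3 ^ 2) := by
  have hspan := SpinAux.span_top
  have hli : LinearIndependent ℂ
      ![Ideal.Quotient.mk spinMinorIdeal 1,
        Ideal.Quotient.mk spinMinorIdeal (X 0),
        Ideal.Quotient.mk spinMinorIdeal (X 1),
        Ideal.Quotient.mk spinMinorIdeal (X 2),
        Ideal.Quotient.mk spinMinorIdeal (X 3),
        Ideal.Quotient.mk spinMinorIdeal (X 0 ^ 2)] := by
    rw [Fintype.linearIndependent_iff]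
    intro c hc
    have hb : Ideal.Quotient.mk spinMinorIdeal
        (C (c 0) * 1 + C (c 1) * X 0 + C (c 2) * X 1 + C (c 3) * X 2
          + C (c 4) * X 3 + C (c 5) * X 0 ^ 2)
        = ∑ i, c i • ![Ideal.Quotient.mk spinMinorIdeal 1,
            Ideal.Quotient.mk spinMinorIdeal (X 0),
            Ideal.Quotient.mk spinMinorIdeal (X 1),
            Ideal.Quotient.mk spinMinorIdeal (X 2),
            Ideal.Quotient.mk spinMinorIdeal (X 3),
            Ideal.Quotient.mk spinMinorIdeal (X 0 ^ 2)] i := by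
      rw [Fin.sum_univ_six]
      show _ = c 0 • Ideal.Quotient.mk spinMinorIdeal 1
        + c 1 • Ideal.Quotient.mk spinMinorIdeal (X 0)
        + c 2 • Ideal.Quotient.mk spinMinorIdeal (X 1)
        + c 3 • Ideal.Quotient.mk spinMinorIdeal (X 2)
        + c 4 • Ideal.Quotient.mk spinMinorIdeal (X 3)
        + c 5 • Ideal.Quotient.mk spinMinorIdeal (X 0 ^ 2)
      simp only [map_add, SpinAux.mk_C_mul]
    have hmem := Ideal.Quotient.eq_zero_iff_mem.mp (hb.trans hc)
    obtain ⟨h0, hD, hpsi⟩ := SpinAux.vanish hmem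
    have e0 : c 0 = 0 := by simpa [SpinAux.ev] using h0
    have e1 : c 1 = 0 := by
      have := hD 0
      simpa +decide [SpinAux.ev, pderiv_mul, pderiv_C, pderiv_pow, Pi.single_apply] using this
    have e2 : c 2 = 0 := by
      have := hD 1
      simpa +decide [SpinAux.ev, pderiv_mul, pderiv_C, pderiv_pow, Pi.single_apply] using this
    have e3 : c 3 = 0 := by
      have := hD 2
      simpa +decide [SpinAux.ev, pderiv_mul, pderiv_C, pderiv_pow, Pi.single_apply] using this
    have e4 : c 4 = 0 := by
      have := hD 3
      simpa +decide [SpinAux.ev, pderiv_mul, pderiv_C, pderiv_pow, Pi.single_apply] using this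
    have e5 : c 5 = 0 := by
      have h := hpsi
      simp +decide [SpinAux.psi, SpinAux.ev, pderiv_mul, pderiv_C, pderiv_pow,
        Pi.single_apply, map_ofNat] at h
      simpa using h
    intro k
    fin_cases k <;> simp only [Fin.zero_eta, Fin.mk_one, Fin.reduceFinMk] <;> assumption
  have hrange : Set.range
      ![Ideal.Quotient.mk spinMinorIdeal 1,
        Ideal.Quotient.mk spinMinorIdeal (X 0),
        Ideal.Quotient.mk spinMinorIdeal (X 1),
        Ideal.Quotient.mk spinMinorIdeal (X 2),
        Ideal.Quotient.mk spinMinorIdeal (X 3),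
        Ideal.Quotient.mk spinMinorIdeal (X 0 ^ 2)]
      = {Ideal.Quotient.mk spinMinorIdeal 1,
        Ideal.Quotient.mk spinMinorIdeal (X 0),
        Ideal.Quotient.mk spinMinorIdeal (X 1),
        Ideal.Quotient.mk spinMinorIdeal (X 2),
        Ideal.Quotient.mk spinMinorIdeal (X 3),
        Ideal.Quotient.mk spinMinorIdeal (X 0 ^ 2)} := by
    simp only [Matrix.range_cons, Matrix.range_empty, Set.union_empty, Set.singleton_union]
  have B := Module.Basis.mk hli (by rw [hrange, hspan])
  have hfr : Module.finrank ℂ (MvPolynomial (Fin 4) ℂ ⧸ spinMinorIdeal) = 6 := by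
    rw [Module.finrank_eq_card_basis B]
    simp
  have rel1 : Ideal.Quotient.mk spinMinorIdeal (X 0 ^ 2)
      = Ideal.Quotient.mk spinMinorIdeal (X 1 ^ 2) :=
    (Ideal.Quotient.mk_eq_mk_iff_sub_mem _ _).mpr
      (by simpa [neg_sub] using neg_mem SpinAux.mY2)
  have rel2 : 2 * Ideal.Quotient.mk spinMinorIdeal (X 0 ^ 2)
      = Ideal.Quotient.mk spinMinorIdeal (X 2 ^ 2) := by
    have h := (Ideal.Quotient.mk_eq_mk_iff_sub_mem _ _).mpr SpinAux.mZ2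
    rw [map_mul, map_ofNat] at h
    exact h.symm
  have rel3 : 2 * Ideal.Quotient.mk spinMinorIdeal (X 0 ^ 2)
      = Ideal.Quotient.mk spinMinorIdeal (X 3 ^ 2) := by
    have h := (Ideal.Quotient.mk_eq_mk_iff_sub_mem _ _).mpr SpinAux.mL2
    rw [map_mul, map_ofNat] at h
    exact h.symm
  exact ⟨hfr, hli, hspan, rel1, rel2, rel3⟩
end

section
/- Consider the perturbed spin-1 Hamiltonian H_t(x,y,z) = [[z, x−iy+t, 0],[x+iy+t, 0, x−iy−t],[0, x+iy−t, −z]] with t ∈ ℝ, t ≠ 0. Then the real points (x,y,z) ∈ ℝ³ at which H_t(x,y,z) has a repeated eigenvalue are exactly the four points (t, 0, √2·t), (t, 0, −√2·t), (−t, 0, √2·t), (−t, 0, −√2·t). -/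
open Matrix

/-- The perturbed spin-1 Hamiltonian
`H_t(x,y,z) = [[z, x−iy+t, 0],[x+iy+t, 0, x−iy−t],[0, x+iy−t, −z]]` with `x,y,z,t ∈ ℝ`. -/
noncomputable def pertSpinHam (t x y z : ℝ) : Matrix (Fin 3) (Fin 3) ℂ :=
  !![(z : ℂ), (x : ℂ) - Complex.I * (y : ℂ) + (t : ℂ), 0;
     (x : ℂ) + Complex.I * (y : ℂ) + (t : ℂ), 0, (x : ℂ) - Complex.I * (y : ℂ) - (t : ℂ);
     0, (x : ℂ) + Complex.I * (y : ℂ) - (t : ℂ), -(z : ℂ)]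

/-!
The characteristic polynomial of `H_t(x,y,z)` is the depressed cubic `X³ - S X - P` with
`S = 2x² + 2y² + 2t² + z²` and `P = 4txz`, which has a multiple root exactly when its
discriminant `4S³ - 27P²` vanishes. Writing `a = 2x²`, `b = 2t²`, `c = z²`, this says
`(a + b + c + 2y²)³ = 27abc`, while AM-GM gives `27abc ≤ (a + b + c)³`. Since `b > 0`,
equality forces `y = 0` and `a = b = c`, i.e. `x = ±t` and `z = ±√2·t`.
-/

open Polynomial

theorem one_lt_rootMultiplicity_X_pow_three_sub_iff {K : Type*} [Field K] [CharZero K]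
    (s p : K) :
    (∃ μ, 1 < (X ^ 3 - C s * X - C p).rootMultiplicity μ) ↔ 4 * s ^ 3 = 27 * p ^ 2 := by
  have hne : (X ^ 3 - C s * X - C p : K[X]) ≠ 0 := by
    apply Monic.ne_zero; monicity!
  simp only [one_lt_rootMultiplicity_iff_isRoot hne, IsRoot.def, eval_sub, eval_pow, eval_X,
    eval_mul, eval_C, derivative_sub, derivative_X_pow, derivative_mul, derivative_C,
    derivative_X, zero_mul, mul_one, zero_add, sub_zero, Nat.cast_ofNat, Nat.reduceSub]
  refine ⟨fun ⟨μ, hroot, hderiv⟩ => ?_, fun hdisc => ?_⟩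
  · linear_combination 27 * (μ ^ 3 - s * μ + p) * hroot +
      (3 * μ ^ 2 - s) * (4 * s - 3 * μ ^ 2) * hderiv
  · rcases eq_or_ne s 0 with rfl | hs
    · refine ⟨0, ?_, by simp⟩
      have : p ^ 2 = 0 := by linear_combination -hdisc / 27
      simpa using this
    · -- a double root satisfies `3μ² = s` and `μ(μ² - s) = p`, hence `μ = -3p/(2s)`
      refine ⟨-3 * p / (2 * s), ?_, ?_⟩
      · field_simp
        linear_combination p * hdisc
      · field_simp
        linear_combination -hdisc

theorem mul_le_add_pow_three {a b c : ℝ} (ha : 0 ≤ a) (hb : 0 ≤ b) (hc : 0 ≤ c) :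
    27 * (a * b * c) ≤ (a + b + c) ^ 3 := by
  have hsum : 0 ≤ a + b + c := by positivity
  nlinarith [mul_nonneg ha (sq_nonneg (b - c)), mul_nonneg hb (sq_nonneg (c - a)),
    mul_nonneg hc (sq_nonneg (a - b)), mul_nonneg hsum (sq_nonneg (a - b)),
    mul_nonneg hsum (sq_nonneg (b - c)), mul_nonneg hsum (sq_nonneg (c - a))]

theorem eq_and_eq_of_add_pow_three_eq {a b c : ℝ} (ha : 0 ≤ a) (hb : 0 ≤ b) (hc : 0 ≤ c)
    (h : (a + b + c) ^ 3 = 27 * (a * b * c)) : a = b ∧ b = c := by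
  rcases (add_nonneg (add_nonneg ha hb) hc).eq_or_lt with hzero | hsum
  · constructor <;> linarith
  have key : (a + b + c) * ((a - b) ^ 2 + (b - c) ^ 2) ≤ 0 := by
    nlinarith [mul_nonneg ha (sq_nonneg (b - c)), mul_nonneg hb (sq_nonneg (c - a)),
      mul_nonneg hc (sq_nonneg (a - b)), mul_nonneg hsum.le (sq_nonneg (c - a))]
  have hsq : (a - b) ^ 2 + (b - c) ^ 2 ≤ 0 := nonpos_of_mul_nonpos_right key hsum
  constructor <;> nlinarith [sq_nonneg (a - b), sq_nonneg (b - c)]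

theorem pertSpinHam_charpoly (t x y z : ℝ) :
    (pertSpinHam t x y z).charpoly =
      X ^ 3 - C ((2 * x ^ 2 + 2 * y ^ 2 + 2 * t ^ 2 + z ^ 2 : ℝ) : ℂ) * X
        - C ((4 * t * x * z : ℝ) : ℂ) := by
  have hI : (C Complex.I : ℂ[X]) ^ 2 = -1 := by
    rw [← map_pow, Complex.I_sq, map_neg, map_one]
  rw [Matrix.charpoly, Matrix.det_fin_three]
  simp only [pertSpinHam, charmatrix_apply, of_apply, cons_val', cons_val_zero, cons_val_one,
    cons_val, cons_val_fin_one, diagonal_apply, Fin.isValue, Fin.reduceEq, if_true, if_false]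
  push_cast
  simp only [map_add, map_sub, map_mul, map_neg, map_zero, map_pow, map_ofNat]
  linear_combination (2 * X * C (y : ℂ) ^ 2) * hI

theorem pertSpin_discriminant_eq_zero_iff {t : ℝ} (ht : t ≠ 0) (x y z : ℝ) :
    4 * (2 * x ^ 2 + 2 * y ^ 2 + 2 * t ^ 2 + z ^ 2) ^ 3 = 27 * (4 * t * x * z) ^ 2 ↔
      x ^ 2 = t ^ 2 ∧ y = 0 ∧ z ^ 2 = 2 * t ^ 2 := by
  constructor
  · intro h
    have ht2 : 0 < 2 * t ^ 2 := by positivity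
    have hcube : (2 * x ^ 2 + 2 * t ^ 2 + z ^ 2 + 2 * y ^ 2) ^ 3
        = 27 * (2 * x ^ 2 * (2 * t ^ 2) * z ^ 2) := by linear_combination h / 4
    have hamgm := mul_le_add_pow_three (by positivity : 0 ≤ 2 * x ^ 2) ht2.le (sq_nonneg z)
    have hsum_le := (pow_le_pow_iff_left₀ (by positivity) (by positivity) three_ne_zero).1
      (hcube.trans_le hamgm)
    have hy0 : y = 0 := by nlinarith [sq_nonneg y]
    subst hy0
    obtain ⟨hxt, htz⟩ := eq_and_eq_of_add_pow_three_eq (a := 2 * x ^ 2) (by positivity) ht2.le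
      (sq_nonneg z) (by linear_combination hcube)
    exact ⟨by linarith, rfl, by linarith⟩
  · rintro ⟨hx, rfl, hz⟩
    rw [show (4 * t * x * z) ^ 2 = 16 * t ^ 2 * x ^ 2 * z ^ 2 by ring, hx, hz]
    ring

theorem weyl_points_iff (t x y z : ℝ) :
    x ^ 2 = t ^ 2 ∧ y = 0 ∧ z ^ 2 = 2 * t ^ 2 ↔
      ((x = t ∧ y = 0 ∧ z = Real.sqrt 2 * t) ∨
       (x = t ∧ y = 0 ∧ z = -(Real.sqrt 2 * t)) ∨
       (x = -t ∧ y = 0 ∧ z = Real.sqrt 2 * t) ∨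
       (x = -t ∧ y = 0 ∧ z = -(Real.sqrt 2 * t))) := by
  have hz : z ^ 2 = 2 * t ^ 2 ↔ z ^ 2 = (Real.sqrt 2 * t) ^ 2 := by
    rw [mul_pow, Real.sq_sqrt zero_le_two]
  rw [hz, sq_eq_sq_iff_eq_or_eq_neg, sq_eq_sq_iff_eq_or_eq_neg]
  tauto

/-- for `t ≠ 0`, the real points `(x,y,z)` at which the perturbed spin-1
Hamiltonian `H_t(x,y,z)` has a repeated eigenvalue (i.e. the characteristic polynomial has
a multiple root) are exactly `(±t, 0, ±√2·t)`. -/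
theorem pert_spin1_weyl_points (t : ℝ) (ht : t ≠ 0) (x y z : ℝ) :
    (∃ μ : ℂ, 2 ≤ (Matrix.charpoly (pertSpinHam t x y z)).rootMultiplicity μ) ↔
      ((x = t ∧ y = 0 ∧ z = Real.sqrt 2 * t) ∨
       (x = t ∧ y = 0 ∧ z = -(Real.sqrt 2 * t)) ∨
       (x = -t ∧ y = 0 ∧ z = Real.sqrt 2 * t) ∨
       (x = -t ∧ y = 0 ∧ z = -(Real.sqrt 2 * t))) := by
  rw [← weyl_points_iff, ← pertSpin_discriminant_eq_zero_iff ht, pertSpinHam_charpoly]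
  change (∃ μ, 1 < _) ↔ _
  rw [one_lt_rootMultiplicity_X_pow_three_sub_iff]
  exact_mod_cast Iff.rfl
end
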